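/- arXiv:1608.08355 — 2 statements merged into one kernel-verified Lean document; each statement's English description precedes it below -/
import Mathlib

section
/- Let n be a positive integer and let T : Hₙ → Hₙ be a left ℍ-linear map, where Hₙ = (Fin n → ℍ). Then the following are equivalent: (a) T is normal, i.e. there exists a left ℍ-linear map T' : Hₙ → Hₙ with ⟪T u, v⟫ = ⟪u, T' v⟫ for all u, v and T ∘ T' = T' ∘ T; (b) there exist an orthonormal family ξ₁, …, ξₙ ∈ Hₙ (⟪ξ_k, ξ_l⟫ = 1 if k = l and 0 otherwise) and quaternions λ₁, …, λₙ ∈ ℂ_i⁺ such that T ξ_k = λ_k • ξ_k for every k, and T u = Σ_{k=1}^{n} (⟪u, ξ_k⟫ · λ_k) • ξ_k for every u ∈ Hₙ. -/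
open Finset

/-- The quaternion-valued inner product on `Hₙ = (Fin n → ℍ)`:
`⟪u, v⟫ = Σ_k u(k) · conj(v(k))`. -/
noncomputable def qInnerFin {n : ℕ} (u v : Fin n → Quaternion ℝ) : Quaternion ℝ :=
  ∑ k, u k * star (v k)

/-- A map `T : Hₙ → Hₙ` is left ℍ-linear. -/
def LeftHLinear {n : ℕ} (T : (Fin n → Quaternion ℝ) → (Fin n → Quaternion ℝ)) : Prop :=
  ∀ (p q : Quaternion ℝ) (u v : Fin n → Quaternion ℝ),
    T (p • u + q • v) = p • T u + q • T v

/-- `ℂ_i⁺ = {a + b i : a ∈ ℝ, b ≥ 0}` as a subset of the quaternions. -/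
def CiPlus : Set (Quaternion ℝ) :=
  {l | l.imJ = 0 ∧ l.imK = 0 ∧ 0 ≤ l.imI}

/-!
Let `ℂ = ℝ + ℝi ⊆ ℍ` act on `Hₙ` from the left. A left ℍ-linear map is then `ℂ`-linear, so every
nonzero quaternionic subspace invariant under `T` contains an eigenvector `w` of `T` with a
complex eigenvalue `z`; since `j z = conj z j`, replacing `w` by `j • w` replaces `z` by `conj z`,
so the eigenvalue may be taken in `ℂ_i⁺`. The real part of `⟪·, ·⟫` is a real inner product for
which left multiplication by `μ` has adjoint left multiplication by `conj μ`, so the classical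
argument shows that `w` is also an eigenvector of a commuting adjoint `T'`. The quaternionic
orthogonal complement of `w` is then invariant under `T` and `T'`, and induction on its dimension
gives the orthonormal eigenbasis. Conversely, `u ↦ Σ_k (⟪u, ξ_k⟫ · conj λ_k) • ξ_k` is an adjoint
of the diagonal map `u ↦ Σ_k (⟪u, ξ_k⟫ · λ_k) • ξ_k` commuting with it.
-/

open Quaternion

noncomputable instance : Module ℂ ℍ := Module.compHom ℍ Quaternion.ofComplex.toRingHom

namespace Quaternion

theorem complex_smul_def (z : ℂ) (q : ℍ) : z • q = (z : ℍ) * q := rfl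

instance : IsScalarTower ℂ ℍ ℍ := ⟨fun _ _ _ => mul_assoc _ _ _⟩

instance : IsScalarTower ℝ ℂ ℍ := ⟨fun r z q => by
  rw [complex_smul_def, complex_smul_def, ← coe_ofComplex, map_smul, smul_mul_assoc]⟩

theorem re_mul_comm (p q : ℍ) : (p * q).re = (q * p).re := by
  simp only [re_mul]
  ring

def j : ℍ := ⟨0, 0, 1, 0⟩

theorem j_ne_zero : j ≠ 0 := fun h => by simpa [j] using congrArg (·.imJ) h

theorem j_mul_coeComplex (z : ℂ) : j * z = ((starRingEnd ℂ z : ℂ) : ℍ) * j := by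
  ext <;> simp only [re_mul, imI_mul, imJ_mul, imK_mul] <;> simp [j]

theorem coeComplex_mem_CiPlus {z : ℂ} (hz : 0 ≤ z.im) : (z : ℍ) ∈ CiPlus :=
  ⟨imJ_coeComplex z, imK_coeComplex z, hz⟩

end Quaternion

section Spectral

variable {n : ℕ}

instance : FiniteDimensional ℂ (Fin n → ℍ) :=
  Module.Finite.of_restrictScalars_finite ℝ ℂ _

section InnerProduct

noncomputable def qInnerFinRight (v : Fin n → ℍ) : (Fin n → ℍ) →ₗ[ℍ] ℍ where
  toFun u := qInnerFin u v
  map_add' u u' := by simp [qInnerFin, add_mul, sum_add_distrib]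
  map_smul' q u := by simp [qInnerFin, mul_sum, mul_assoc]

@[simp] theorem qInnerFinRight_apply (u v : Fin n → ℍ) : qInnerFinRight v u = qInnerFin u v := rfl

theorem qInnerFin_zero_left (v : Fin n → ℍ) : qInnerFin 0 v = 0 := (qInnerFinRight v).map_zero

theorem qInnerFin_add_left (u u' v : Fin n → ℍ) :
    qInnerFin (u + u') v = qInnerFin u v + qInnerFin u' v :=
  (qInnerFinRight v).map_add u u'

theorem qInnerFin_sub_left (u u' v : Fin n → ℍ) :
    qInnerFin (u - u') v = qInnerFin u v - qInnerFin u' v :=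
  (qInnerFinRight v).map_sub u u'

theorem qInnerFin_smul_left (q : ℍ) (u v : Fin n → ℍ) :
    qInnerFin (q • u) v = q * qInnerFin u v :=
  (qInnerFinRight v).map_smul q u

theorem qInnerFin_sum_left {ι : Type*} (s : Finset ι) (f : ι → Fin n → ℍ) (v : Fin n → ℍ) :
    qInnerFin (∑ i ∈ s, f i) v = ∑ i ∈ s, qInnerFin (f i) v :=
  map_sum (qInnerFinRight v) f s

theorem star_qInnerFin (u v : Fin n → ℍ) : star (qInnerFin u v) = qInnerFin v u := by
  simp [qInnerFin, star_sum]

theorem qInnerFin_smul_right (q : ℍ) (u v : Fin n → ℍ) :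
    qInnerFin u (q • v) = qInnerFin u v * star q := by
  rw [← star_qInnerFin, qInnerFin_smul_left, star_mul, star_qInnerFin]

theorem qInnerFin_sum_right {ι : Type*} (s : Finset ι) (f : ι → Fin n → ℍ) (u : Fin n → ℍ) :
    qInnerFin u (∑ i ∈ s, f i) = ∑ i ∈ s, qInnerFin u (f i) := by
  rw [← star_qInnerFin, qInnerFin_sum_left, star_sum]
  simp only [star_qInnerFin]

theorem re_qInnerFin_smul_left (q : ℍ) (u v : Fin n → ℍ) :
    (qInnerFin (q • u) v).re = (qInnerFin u (star q • v)).re := by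
  rw [qInnerFin_smul_left, qInnerFin_smul_right, star_star, re_mul_comm]

theorem qInnerFin_self (u : Fin n → ℍ) : qInnerFin u u = ((∑ k, normSq (u k) : ℝ) : ℍ) := by
  simp only [qInnerFin, self_mul_star]
  exact_mod_cast (map_sum (algebraMap ℝ ℍ) _ _).symm

theorem re_qInnerFin_self_pos {u : Fin n → ℍ} (hu : u ≠ 0) : 0 < (qInnerFin u u).re := by
  obtain ⟨k, hk⟩ := Function.ne_iff.mp hu
  rw [qInnerFin_self, re_coe]
  exact sum_pos' (fun i _ => normSq_nonneg)
    ⟨k, mem_univ k, normSq_nonneg.lt_of_ne (normSq_ne_zero.mpr hk).symm⟩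

end InnerProduct

section LeftHLinear

variable {T : (Fin n → ℍ) → Fin n → ℍ}

theorem LeftHLinear.map_zero (hT : LeftHLinear T) : T 0 = 0 := by
  simpa using hT 0 0 0 0

def LeftHLinear.toLinearMap (hT : LeftHLinear T) : (Fin n → ℍ) →ₗ[ℍ] Fin n → ℍ where
  toFun := T
  map_add' u v := by simpa using hT 1 1 u v
  map_smul' q u := by simpa [hT.map_zero] using hT q 0 u 0

theorem LeftHLinear.map_smul (hT : LeftHLinear T) (q : ℍ) (u : Fin n → ℍ) : T (q • u) = q • T u :=
  hT.toLinearMap.map_smul q u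

theorem LeftHLinear.map_sub (hT : LeftHLinear T) (u v : Fin n → ℍ) : T (u - v) = T u - T v :=
  hT.toLinearMap.map_sub u v

theorem LeftHLinear.map_sum (hT : LeftHLinear T) {ι : Type*} (s : Finset ι) (f : ι → Fin n → ℍ) :
    T (∑ i ∈ s, f i) = ∑ i ∈ s, T (f i) :=
  _root_.map_sum hT.toLinearMap f s

theorem LeftHLinear.exists_complex_eigenvector (hT : LeftHLinear T) {W : Submodule ℍ (Fin n → ℍ)}
    (hW : W ≠ ⊥) (hTW : ∀ u ∈ W, T u ∈ W) : ∃ w ∈ W, w ≠ 0 ∧ ∃ z : ℂ, T w = (z : ℍ) • w := by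
  let Wℂ := W.restrictScalars ℂ
  have : Nontrivial Wℂ := Submodule.nontrivial_iff_ne_bot.mpr (by simpa [Wℂ] using hW)
  obtain ⟨z, hz⟩ := Module.End.exists_eigenvalue
    ((hT.toLinearMap.restrictScalars ℂ).restrict (p := Wℂ) (q := Wℂ) hTW)
  obtain ⟨w, hw⟩ := hz.exists_hasEigenvector
  exact ⟨w, w.2, fun h => hw.2 (Subtype.ext h), z, congrArg Subtype.val hw.apply_eq_smul⟩

theorem LeftHLinear.exists_eigenvector_mem_CiPlus (hT : LeftHLinear T)
    {W : Submodule ℍ (Fin n → ℍ)} (hW : W ≠ ⊥) (hTW : ∀ u ∈ W, T u ∈ W) :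
    ∃ w ∈ W, w ≠ 0 ∧ ∃ μ ∈ CiPlus, T w = μ • w := by
  obtain ⟨w, hwW, hw0, z, hz⟩ := hT.exists_complex_eigenvector hW hTW
  by_cases him : 0 ≤ z.im
  · exact ⟨w, hwW, hw0, z, coeComplex_mem_CiPlus him, hz⟩
  · refine ⟨j • w, W.smul_mem j hwW, smul_ne_zero j_ne_zero hw0, (starRingEnd ℂ z : ℂ),
      coeComplex_mem_CiPlus ?_, ?_⟩
    · simp only [Complex.conj_im]
      linarith
    · rw [hT.map_smul, hz, smul_smul, j_mul_coeComplex, ← smul_smul]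

theorem LeftHLinear.exists_unit_eigenvector_mem_CiPlus (hT : LeftHLinear T)
    {W : Submodule ℍ (Fin n → ℍ)} (hW : W ≠ ⊥) (hTW : ∀ u ∈ W, T u ∈ W) :
    ∃ w ∈ W, qInnerFin w w = 1 ∧ ∃ μ ∈ CiPlus, T w = μ • w := by
  obtain ⟨w, hwW, hw0, μ, hμ, hw⟩ := hT.exists_eigenvector_mem_CiPlus hW hTW
  set s := ∑ k, normSq (w k)
  have hs : 0 < s := by simpa [qInnerFin_self] using re_qInnerFin_self_pos hw0
  refine ⟨(((√s)⁻¹ : ℝ) : ℍ) • w, W.smul_mem _ hwW, ?_, μ, hμ, ?_⟩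
  · rw [qInnerFin_smul_left, qInnerFin_smul_right, qInnerFin_self, star_coe,
      ← Quaternion.coe_mul, ← Quaternion.coe_mul, ← Quaternion.coe_one]
    congr 1
    field_simp
    exact (Real.sq_sqrt hs.le).symm
  · rw [hT.map_smul, hw, smul_smul, smul_smul, coe_commutes]

end LeftHLinear

def IsQAdjointPair (T T' : (Fin n → ℍ) → Fin n → ℍ) : Prop :=
  ∀ u v, qInnerFin (T u) v = qInnerFin u (T' v)

namespace IsQAdjointPair

variable {T T' : (Fin n → ℍ) → Fin n → ℍ}

theorem symm (h : IsQAdjointPair T T') : IsQAdjointPair T' T := fun u v => by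
  rw [← star_qInnerFin, ← h, star_qInnerFin]

theorem qInnerFin_apply_eq_zero (h : IsQAdjointPair T T') {u w : Fin n → ℍ} {q : ℍ}
    (hw : T' w = q • w) (hu : qInnerFin u w = 0) : qInnerFin (T u) w = 0 := by
  rw [h, hw, qInnerFin_smul_right, hu, zero_mul]

theorem apply_eq_star_smul (h : IsQAdjointPair T T') (hT : LeftHLinear T) (hT' : LeftHLinear T')
    (hcomm : T ∘ T' = T' ∘ T) {w : Fin n → ℍ} {μ : ℍ} (hw : T w = μ • w) :
    T' w = star μ • w := by
  set x := T' w - star μ • w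
  -- `x` is again a `μ`-eigenvector of `T`, which makes it orthogonal to itself for `re ⟪·, ·⟫`
  have hx : T x = μ • x := by
    rw [hT.map_sub, hT.map_smul, ← Function.comp_apply (f := T), hcomm, Function.comp_apply, hw,
      hT'.map_smul]
    simp only [x, smul_sub, smul_smul, star_comm_self']
  have hxx : (qInnerFin x x).re = 0 := calc
    (qInnerFin x x).re = (qInnerFin (T' w) x).re - (qInnerFin (star μ • w) x).re := by
      rw [qInnerFin_sub_left, re_sub]
    _ = (qInnerFin w (T x)).re - (qInnerFin w (μ • x)).re := by
      rw [h.symm, re_qInnerFin_smul_left, star_star]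
    _ = 0 := by rw [hx, sub_self]
  by_contra hne
  exact (re_qInnerFin_self_pos (sub_ne_zero.mpr hne)).ne' hxx

end IsQAdjointPair

section Orthonormal

variable {m : ℕ}

def QOrthonormal (ξ : Fin m → Fin n → ℍ) : Prop :=
  ∀ k l, qInnerFin (ξ k) (ξ l) = if k = l then 1 else 0

theorem QOrthonormal.qInnerFin_sum_smul {ξ : Fin m → Fin n → ℍ} (hξ : QOrthonormal ξ)
    (c : Fin m → ℍ) (t : Fin m) : qInnerFin (∑ k, c k • ξ k) (ξ t) = c t := by
  simp [qInnerFin_sum_left, qInnerFin_smul_left, hξ _ t]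

theorem QOrthonormal.cons {ξ : Fin m → Fin n → ℍ} (hξ : QOrthonormal ξ) {w : Fin n → ℍ}
    (hw : qInnerFin w w = 1) (hξw : ∀ t, qInnerFin (ξ t) w = 0) :
    QOrthonormal (Fin.cons w ξ : Fin (m + 1) → Fin n → ℍ) := by
  have hwξ : ∀ t, qInnerFin w (ξ t) = 0 := fun t => by rw [← star_qInnerFin, hξw, star_zero]
  intro k l
  cases k using Fin.cases <;> cases l using Fin.cases <;>
    simp [hw, hξw, hwξ, hξ _ _, Fin.succ_ne_zero, (Fin.succ_ne_zero _).symm]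

theorem QOrthonormal.card_eq {ξ : Fin m → Fin n → ℍ} (hξ : QOrthonormal ξ)
    (hsum : ∀ u, u = ∑ s, qInnerFin u (ξ s) • ξ s) : m = n := by
  have hli : LinearIndependent ℍ ξ := Fintype.linearIndependent_iff.mpr fun c hc t => by
    rw [← hξ.qInnerFin_sum_smul c t, hc, qInnerFin_zero_left]
  have hsp : ⊤ ≤ Submodule.span ℍ (Set.range ξ) := fun u _ => hsum u ▸
    Submodule.sum_mem _ fun s _ => Submodule.smul_mem _ _ (Submodule.subset_span ⟨s, rfl⟩)
  simpa using (Module.finrank_eq_card_basis (Module.Basis.mk hli hsp)).symm.trans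
    (Module.finrank_fin_fun ℍ)

end Orthonormal

structure IsEigenDecomposition (T : (Fin n → ℍ) → Fin n → ℍ) (W : Submodule ℍ (Fin n → ℍ))
    {m : ℕ} (ξ : Fin m → Fin n → ℍ) (lam : Fin m → ℍ) : Prop where
  mem : ∀ s, ξ s ∈ W
  orthonormal : QOrthonormal ξ
  mem_CiPlus : ∀ s, lam s ∈ CiPlus
  apply_eq : ∀ s, T (ξ s) = lam s • ξ s
  eq_sum : ∀ u ∈ W, u = ∑ s, qInnerFin u (ξ s) • ξ s

namespace IsEigenDecomposition

variable {T : (Fin n → ℍ) → Fin n → ℍ} {W : Submodule ℍ (Fin n → ℍ)} {m : ℕ}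
  {ξ : Fin m → Fin n → ℍ} {lam : Fin m → ℍ}

theorem bot : IsEigenDecomposition T ⊥ Fin.elim0 Fin.elim0 where
  mem := fun s => s.elim0
  orthonormal := fun s => s.elim0
  mem_CiPlus := fun s => s.elim0
  apply_eq := fun s => s.elim0
  eq_sum u hu := by simpa using hu

theorem cons {w : Fin n → ℍ} {μ : ℍ} (hwW : w ∈ W) (hw : qInnerFin w w = 1) (hμ : μ ∈ CiPlus)
    (hTw : T w = μ • w) (h : IsEigenDecomposition T (W ⊓ LinearMap.ker (qInnerFinRight w)) ξ lam) :
    IsEigenDecomposition T W (Fin.cons w ξ) (Fin.cons μ lam) where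
  mem := Fin.cases hwW fun s => (h.mem s).1
  orthonormal := h.orthonormal.cons hw fun t => (h.mem t).2
  mem_CiPlus := Fin.cases hμ h.mem_CiPlus
  apply_eq := Fin.cases hTw h.apply_eq
  eq_sum u hu := by
    have hwξ : ∀ t, qInnerFin w (ξ t) = 0 := fun t => by
      rw [← star_qInnerFin, show qInnerFin (ξ t) w = 0 from (h.mem t).2, star_zero]
    have hu' : u - qInnerFin u w • w ∈ W ⊓ LinearMap.ker (qInnerFinRight w) :=
      ⟨W.sub_mem hu (W.smul_mem _ hwW), by
        simp [qInnerFin_sub_left, qInnerFin_smul_left, hw]⟩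
    have := h.eq_sum _ hu'
    simp only [qInnerFin_sub_left, qInnerFin_smul_left, hwξ, mul_zero, sub_zero] at this
    rw [Fin.sum_univ_succ, Fin.cons_zero]
    simp only [Fin.cons_succ]
    rw [← this]
    abel

theorem apply_eq_sum (h : IsEigenDecomposition T ⊤ ξ lam) (hT : LeftHLinear T) (u : Fin n → ℍ) :
    T u = ∑ s, (qInnerFin u (ξ s) * lam s) • ξ s := by
  conv_lhs => rw [h.eq_sum u Submodule.mem_top]
  simp only [hT.map_sum, hT.map_smul, h.apply_eq, smul_smul]

end IsEigenDecomposition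

theorem exists_isEigenDecomposition {T T' : (Fin n → ℍ) → Fin n → ℍ} (hT : LeftHLinear T)
    (hT' : LeftHLinear T') (hadj : IsQAdjointPair T T') (hcomm : T ∘ T' = T' ∘ T)
    (W : Submodule ℍ (Fin n → ℍ)) (hTW : ∀ u ∈ W, T u ∈ W) (hT'W : ∀ u ∈ W, T' u ∈ W) :
    ∃ (m : ℕ) (ξ : Fin m → Fin n → ℍ) (lam : Fin m → ℍ), IsEigenDecomposition T W ξ lam := by
  induction hd : Module.finrank ℍ W using Nat.strong_induction_on generalizing W with
  | _ d ih =>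
    obtain rfl | hW := eq_or_ne W ⊥
    · exact ⟨0, _, _, .bot⟩
    obtain ⟨w, hwW, hw, μ, hμ, hTw⟩ := hT.exists_unit_eigenvector_mem_CiPlus hW hTW
    have hT'w : T' w = star μ • w := hadj.apply_eq_star_smul hT hT' hcomm hTw
    set W' := W ⊓ LinearMap.ker (qInnerFinRight w)
    have hTW' : ∀ u ∈ W', T u ∈ W' := fun u hu =>
      ⟨hTW u hu.1, hadj.qInnerFin_apply_eq_zero hT'w hu.2⟩
    have hT'W' : ∀ u ∈ W', T' u ∈ W' := fun u hu =>
      ⟨hT'W u hu.1, hadj.symm.qInnerFin_apply_eq_zero hTw hu.2⟩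
    have hlt : W' < W := SetLike.lt_iff_le_and_exists.mpr
      ⟨inf_le_left, w, hwW, fun h => one_ne_zero (hw.symm.trans (h.2 : qInnerFin w w = 0))⟩
    obtain ⟨m, ξ, lam, h⟩ :=
      ih _ (hd ▸ Submodule.finrank_lt_finrank_of_lt hlt) W' hTW' hT'W' rfl
    exact ⟨m + 1, _, _, h.cons hwW hw hμ hTw⟩

section Diagonal

variable {m : ℕ}

noncomputable def diagOp (ξ : Fin m → Fin n → ℍ) (c : Fin m → ℍ) (u : Fin n → ℍ) : Fin n → ℍ :=
  ∑ k, (qInnerFin u (ξ k) * c k) • ξ k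

theorem leftHLinear_diagOp (ξ : Fin m → Fin n → ℍ) (c : Fin m → ℍ) : LeftHLinear (diagOp ξ c) := by
  intro p q u v
  simp only [diagOp, smul_sum, ← sum_add_distrib, smul_smul, ← add_smul, qInnerFin_add_left,
    qInnerFin_smul_left, add_mul, mul_assoc]

theorem isQAdjointPair_diagOp (ξ : Fin m → Fin n → ℍ) (c : Fin m → ℍ) :
    IsQAdjointPair (diagOp ξ c) (diagOp ξ (star c)) := by
  intro u v
  simp only [diagOp, qInnerFin_sum_left, qInnerFin_sum_right, qInnerFin_smul_left,
    qInnerFin_smul_right, star_mul, Pi.star_apply, star_star, star_qInnerFin, mul_assoc]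

theorem diagOp_diagOp {ξ : Fin m → Fin n → ℍ} (hξ : QOrthonormal ξ) (c d : Fin m → ℍ)
    (u : Fin n → ℍ) : diagOp ξ c (diagOp ξ d u) = diagOp ξ (d * c) u := by
  simp only [diagOp, hξ.qInnerFin_sum_smul, Pi.mul_apply, mul_assoc]

theorem diagOp_comp_diagOp_star {ξ : Fin m → Fin n → ℍ} (hξ : QOrthonormal ξ) (c : Fin m → ℍ) :
    diagOp ξ c ∘ diagOp ξ (star c) = diagOp ξ (star c) ∘ diagOp ξ c := by
  ext1 u
  simp only [Function.comp_apply, diagOp_diagOp hξ]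
  congr 1
  ext1 k
  exact star_comm_self' (c k)

end Diagonal

end Spectral

theorem normal_iff_diagonalizable_general {n : ℕ}
    (T : (Fin n → Quaternion ℝ) → (Fin n → Quaternion ℝ)) (hT : LeftHLinear T) :
    (∃ T' : (Fin n → Quaternion ℝ) → (Fin n → Quaternion ℝ), LeftHLinear T' ∧
        (∀ u v, qInnerFin (T u) v = qInnerFin u (T' v)) ∧ T ∘ T' = T' ∘ T) ↔
    (∃ (ξ : Fin n → (Fin n → Quaternion ℝ)) (lam : Fin n → Quaternion ℝ),
        (∀ k l, qInnerFin (ξ k) (ξ l) = if k = l then 1 else 0) ∧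
        (∀ k, lam k ∈ CiPlus) ∧
        (∀ k, T (ξ k) = lam k • ξ k) ∧
        (∀ u, T u = ∑ k, (qInnerFin u (ξ k) * lam k) • ξ k)) := by
  constructor
  · rintro ⟨T', hT', hadj, hcomm⟩
    obtain ⟨m, ξ, lam, h⟩ := exists_isEigenDecomposition hT hT' hadj hcomm ⊤
      (fun _ _ => Submodule.mem_top) (fun _ _ => Submodule.mem_top)
    obtain rfl : m = n := h.orthonormal.card_eq fun u => h.eq_sum u Submodule.mem_top
    exact ⟨ξ, lam, h.orthonormal, h.mem_CiPlus, h.apply_eq, h.apply_eq_sum hT⟩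
  · rintro ⟨ξ, lam, hξ, -, -, hTξ⟩
    obtain rfl : T = diagOp ξ lam := funext hTξ
    exact ⟨diagOp ξ (star lam), leftHLinear_diagOp ξ _, isQAdjointPair_diagOp ξ lam,
      diagOp_comp_diagOp_star hξ lam⟩

/-- A left ℍ-linear map `T` on `Hₙ = (Fin n → ℍ)` is normal (it admits a left ℍ-linear
adjoint commuting with it) iff it is diagonalized by an orthonormal family `ξ₁, …, ξₙ`
with eigenvalues `λ₁, …, λₙ ∈ ℂ_i⁺`, in which case
`T u = Σ_k (⟪u, ξ_k⟫ · λ_k) • ξ_k` for every `u`. -/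
theorem normal_iff_diagonalizable {n : ℕ} (hn : 0 < n)
    (T : (Fin n → Quaternion ℝ) → (Fin n → Quaternion ℝ)) (hT : LeftHLinear T) :
    (∃ T' : (Fin n → Quaternion ℝ) → (Fin n → Quaternion ℝ), LeftHLinear T' ∧
        (∀ u v, qInnerFin (T u) v = qInnerFin u (T' v)) ∧ T ∘ T' = T' ∘ T) ↔
    (∃ (ξ : Fin n → (Fin n → Quaternion ℝ)) (lam : Fin n → Quaternion ℝ),
        (∀ k l, qInnerFin (ξ k) (ξ l) = if k = l then 1 else 0) ∧
        (∀ k, lam k ∈ CiPlus) ∧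
        (∀ k, T (ξ k) = lam k • ξ k) ∧
        (∀ u, T u = ∑ k, (qInnerFin u (ξ k) * lam k) • ξ k)) :=
  normal_iff_diagonalizable_general T hT
end

section
/- Let τ > 0 and let F ∈ L²([-τ, τ]², ℍ). If ∫_{[-τ,τ]²} F(ω₁, ω₂)·exp(j·π n₂ ω₂/τ)·exp(i·π n₁ ω₁/τ) dω₁ dω₂ = 0 for every (n₁, n₂) ∈ ℤ², then F = 0 almost everywhere on [-τ, τ]². -/
/-!
Write `E(a, b) = exp(j a) exp(i b) = cos a cos b + cos a sin b i + sin a cos b j - sin a sin b k`.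
Since cos is even and sin is odd, replacing `(n₁, n₂)` by `(±n₁, ±n₂)` and forming right
`ℍ`-linear combinations of the four kernels `E(±a, ±b)` isolates the real scalars
`cos (a + b)` and `sin (a + b)`. So the hypothesis says that every real linear functional `φ`
of `F` has vanishing coefficients against `exp (i (a + b))`, which are the products of the
one-dimensional Fourier characters of period `2τ`. The two-dimensional trigonometric system
is complete in `L²` (Parseval in each variable, glued by Fubini), hence `φ ∘ F = 0` a.e. for
every `φ`, and therefore `F = 0` a.e.
-/

open MeasureTheory Real

def qi : Quaternion ℝ := ⟨0, 1, 0, 0⟩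
def qj : Quaternion ℝ := ⟨0, 0, 1, 0⟩

open Set
open scoped Quaternion

namespace MeasureTheory

variable {α β E : Type*} [MeasurableSpace α] [MeasurableSpace β] [NormedAddCommGroup E]

theorem MemLp.ae_eq_zero_of_integral_sq_norm_eq_zero {μ : Measure α} {f : α → E}
    (hf : MemLp f 2 μ) (h : ∫ x, ‖f x‖ ^ 2 ∂μ = 0) : f =ᵐ[μ] 0 := by
  have hsq := (integral_eq_zero_iff_of_nonneg (fun x => by positivity)
    ((memLp_two_iff_integrable_sq_norm hf.1).1 hf)).1 h
  filter_upwards [hsq] with x hx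
  simpa using hx

theorem sq_norm_integral_le [NormedSpace ℝ E] {ν : Measure β} [IsFiniteMeasure ν] {h : β → E}
    (hh : MemLp h 2 ν) : ‖∫ y, h y ∂ν‖ ^ 2 ≤ ν.real univ * ∫ y, ‖h y‖ ^ 2 ∂ν := by
  have holder := integral_mul_le_Lp_mul_Lq_of_nonneg (μ := ν) Real.HolderConjugate.two_two
    (f := fun y => ‖h y‖) (g := fun _ => (1 : ℝ)) (ae_of_all _ fun y => norm_nonneg (h y))
    (ae_of_all _ fun _ => zero_le_one) (by simpa using hh.norm) (by simpa using memLp_const 1)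
  simp only [mul_one, one_pow, integral_const, smul_eq_mul, rpow_two] at holder
  calc ‖∫ y, h y ∂ν‖ ^ 2 ≤ (∫ y, ‖h y‖ ∂ν) ^ 2 := by
        gcongr
        exact norm_integral_le_integral_norm h
    _ ≤ ((∫ y, ‖h y‖ ^ 2 ∂ν) ^ (1 / 2 : ℝ) * ν.real univ ^ (1 / 2 : ℝ)) ^ 2 :=
        pow_le_pow_left₀ (integral_nonneg fun y => norm_nonneg (h y)) holder 2
    _ = ν.real univ * ∫ y, ‖h y‖ ^ 2 ∂ν := by
        rw [mul_pow, ← sqrt_eq_rpow, ← sqrt_eq_rpow, sq_sqrt (by positivity),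
          sq_sqrt (by positivity), mul_comm]

theorem MemLp.ae_memLp_two_prodMk_left {μ : Measure α} {ν : Measure β} [SFinite μ] [SFinite ν]
    {u : α × β → E} (hu : MemLp u 2 (μ.prod ν)) : ∀ᵐ x ∂μ, MemLp (fun y => u (x, y)) 2 ν := by
  filter_upwards [hu.1.prodMk_left, ((memLp_two_iff_integrable_sq_norm hu.1).1 hu).prod_right_ae]
    with x hmeas hsq
  exact (memLp_two_iff_integrable_sq_norm hmeas).2 hsq

theorem MemLp.integral_prod_right {μ : Measure α} {ν : Measure β} [SFinite μ] [IsFiniteMeasure ν]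
    [NormedSpace ℝ E] [CompleteSpace E] {u : α × β → E} (hu : MemLp u 2 (μ.prod ν)) :
    MemLp (fun x => ∫ y, u (x, y) ∂ν) 2 μ := by
  have hmeas : AEStronglyMeasurable (fun x => ∫ y, u (x, y) ∂ν) μ := hu.1.integral_prod_right'
  rw [memLp_two_iff_integrable_sq_norm hmeas]
  refine Integrable.mono'
    (((memLp_two_iff_integrable_sq_norm hu.1).1 hu).integral_prod_left.const_mul (ν.real univ))
    (hmeas.norm.pow 2) ?_
  filter_upwards [hu.ae_memLp_two_prodMk_left] with x hx
  rw [Real.norm_of_nonneg (by positivity)]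
  exact sq_norm_integral_le hx

theorem AEStronglyMeasurable.ae_eq_zero_of_ae_ae {μ : Measure α} {ν : Measure β} [SFinite ν]
    {u : α × β → E} (hu : AEStronglyMeasurable u (μ.prod ν))
    (h : ∀ᵐ x ∂μ, ∀ᵐ y ∂ν, u (x, y) = 0) : u =ᵐ[μ.prod ν] 0 := by
  have hmk : ∀ᵐ p ∂μ.prod ν, hu.mk u p = 0 := by
    rw [Measure.ae_prod_iff_ae_ae
      (hu.stronglyMeasurable_mk.measurableSet_eq_fun stronglyMeasurable_const)]
    filter_upwards [Measure.ae_ae_of_ae_prod hu.ae_eq_mk, h] with x hx hx0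
    filter_upwards [hx, hx0] with y hy hy0
    rw [← hy, hy0]
  filter_upwards [hu.ae_eq_mk, hmk] with p hp hp0
  rw [hp, hp0, Pi.zero_apply]

end MeasureTheory

section CompleteSystem

variable {α β ι κ : Type*} [MeasurableSpace α] [MeasurableSpace β]

def IsCompleteSystem (μ : Measure α) (e : ι → α → ℂ) : Prop :=
  ∀ ⦃v : α → ℂ⦄, MemLp v 2 μ → (∀ i, ∫ x, v x * e i x ∂μ = 0) → v =ᵐ[μ] 0

theorem isCompleteSystem_fourier_Ioc {a b : ℝ} (hab : a < b) :
    IsCompleteSystem (volume.restrict (Ioc a b))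
      fun n (x : ℝ) => fourier n (x : AddCircle (b - a)) := by
  intro v hv h
  have hcoeff : ∀ n, fourierCoeffOn hab v n = 0 := fun n => by
    rw [fourierCoeffOn_eq_integral, intervalIntegral.integral_of_le hab.le]
    simp_rw [smul_eq_mul, mul_comm _ (v _), h, smul_zero]
  have hparseval := hasSum_sq_fourierCoeffOn hab hv
  simp only [hcoeff, norm_zero, ne_eq, OfNat.ofNat_ne_zero, not_false_eq_true, zero_pow]
    at hparseval
  have h0 := hasSum_zero.unique hparseval
  rw [eq_comm, smul_eq_zero, intervalIntegral.integral_of_le hab.le] at h0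
  exact hv.ae_eq_zero_of_integral_sq_norm_eq_zero
    (h0.resolve_left (by simpa using sub_ne_zero.2 hab.ne'))

theorem isCompleteSystem_fourier_Icc {a b : ℝ} (hab : a < b) :
    IsCompleteSystem (volume.restrict (Icc a b))
      fun n (x : ℝ) => fourier n (x : AddCircle (b - a)) := by
  rw [← Measure.restrict_congr_set Ioc_ae_eq_Icc]
  exact isCompleteSystem_fourier_Ioc hab

/-- The partial coefficients `x ↦ ∫ u(x, y) f_j(y) dν` lie in `L²(μ)` and pair to zero with
every `e i`, so they vanish; then almost every section `u(x, ·)` pairs to zero with every `f j`. -/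
theorem IsCompleteSystem.prod {μ : Measure α} {ν : Measure β} [IsFiniteMeasure μ]
    [IsFiniteMeasure ν] [Countable κ] {e : ι → α → ℂ} {f : κ → β → ℂ}
    (he : IsCompleteSystem μ e) (hf : IsCompleteSystem ν f)
    (he_bdd : ∀ i, MemLp (e i) ⊤ μ) (hf_bdd : ∀ j, MemLp (f j) ⊤ ν) :
    IsCompleteSystem (μ.prod ν) fun (ij : ι × κ) (p : α × β) => e ij.1 p.1 * f ij.2 p.2 := by
  intro u hu h
  have hpartial : ∀ j, (fun x => ∫ y, u (x, y) * f j y ∂ν) =ᵐ[μ] 0 := fun j => by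
    refine he (((hf_bdd j).comp_snd μ).mul' hu).integral_prod_right fun i => ?_
    have hint : Integrable (fun p : α × β => u p * (e i p.1 * f j p.2)) (μ.prod ν) :=
      ((((hf_bdd j).comp_snd μ).mul' (r := ⊤) ((he_bdd i).comp_fst ν)).mul' hu).integrable
        one_le_two
    rw [← h (i, j), integral_prod _ hint]
    refine integral_congr_ae (ae_of_all _ fun x => ?_)
    simp only [← integral_mul_const]
    congr 1 with y
    ring
  refine hu.1.ae_eq_zero_of_ae_ae ?_
  filter_upwards [ae_all_iff.2 hpartial, hu.ae_memLp_two_prodMk_left] with x hx hux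
  exact hf hux hx

theorem IsCompleteSystem.ae_eq_zero_of_integral_re_im_smul {μ : Measure α} [IsFiniteMeasure μ]
    {e : ι → α → ℂ} (he : IsCompleteSystem μ e) (he_bdd : ∀ i, MemLp (e i) ⊤ μ)
    {E : Type*} [NormedAddCommGroup E] [NormedSpace ℝ E] [CompleteSpace E]
    [SecondCountableTopology E] {F : α → E} (hF : MemLp F 2 μ)
    (hre : ∀ i, ∫ x, (e i x).re • F x ∂μ = 0) (him : ∀ i, ∫ x, (e i x).im • F x ∂μ = 0) :
    F =ᵐ[μ] 0 := by
  refine ae_eq_zero_of_forall_dual ℝ fun φ => ?_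
  have hint : ∀ c : α → ℝ, MemLp c ⊤ μ → Integrable (fun x => φ (F x) * c x) μ := fun c hc =>
    ((φ.comp_memLp' hF).integrable one_le_two).mul_of_top_left hc
  have hφ : ∀ c : α → ℝ, MemLp c ⊤ μ → ∫ x, φ (F x) * c x ∂μ = φ (∫ x, c x • F x ∂μ) :=
    fun c hc => calc
      ∫ x, φ (F x) * c x ∂μ = ∫ x, φ (c x • F x) ∂μ := by
        simp only [map_smul, smul_eq_mul, mul_comm]
      _ = φ (∫ x, c x • F x ∂μ) :=
        φ.integral_comp_comm ((hF.integrable one_le_two).smul_of_top_right hc)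
  have hzero : ∀ i, ∫ x, (φ (F x) : ℂ) * e i x ∂μ = 0 := fun i => by
    have hre' : MemLp (fun x => (e i x).re) ⊤ μ := (he_bdd i).re
    have him' : MemLp (fun x => (e i x).im) ⊤ μ := (he_bdd i).im
    calc ∫ x, (φ (F x) : ℂ) * e i x ∂μ
        = ∫ x, ((φ (F x) * (e i x).re : ℝ) : ℂ) +
            ((φ (F x) * (e i x).im : ℝ) : ℂ) * Complex.I ∂μ := by
          congr 1 with x
          conv_lhs => rw [← Complex.re_add_im (e i x)]
          push_cast
          ring
      _ = 0 := by
          rw [integral_add, integral_mul_const, integral_complex_ofReal, integral_complex_ofReal,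
            hφ _ hre', hφ _ him', hre, him]
          · simp
          · exact (hint _ hre').ofReal
          · exact (hint _ him').ofReal.mul_const Complex.I
  filter_upwards [he ((Complex.ofRealCLM.comp φ).comp_memLp' hF) hzero] with x hx
  simpa using hx

end CompleteSystem

theorem norm_fourier_coe (T : ℝ) (n : ℤ) (x : ℝ) : ‖fourier n (x : AddCircle T)‖ = 1 := by
  rw [fourier_apply]
  exact Circle.norm_coe _

theorem memLp_top_fourier_coe (T : ℝ) (n : ℤ) (μ : Measure ℝ) :
    MemLp (fun x : ℝ => fourier n (x : AddCircle T)) ⊤ μ :=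
  memLp_top_of_bound (by fun_prop : Continuous _).aestronglyMeasurable 1
    (ae_of_all _ fun x => (norm_fourier_coe T n x).le)

theorem fourier_mul_fourier_eq_exp (τ : ℝ) (n : ℤ × ℤ) (ω : ℝ × ℝ) :
    fourier n.1 (ω.1 : AddCircle (τ - -τ)) * fourier n.2 (ω.2 : AddCircle (τ - -τ)) =
      Complex.exp (↑(π * n.2 * ω.2 / τ + π * n.1 * ω.1 / τ) * Complex.I) := by
  rw [fourier_coe_apply, fourier_coe_apply, ← Complex.exp_add]
  congr 1
  push_cast
  field_simp
  ring

namespace Quaternion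

theorem norm_eq_one_of_normSq_eq_one {q : Quaternion ℝ} (h : normSq q = 1) : ‖q‖ = 1 := by
  rw [normSq_eq_norm_mul_self] at h
  exact (mul_self_eq_one_iff.1 h).resolve_right (by linarith [norm_nonneg q])

theorem exp_smul_of_re_eq_zero_of_norm_eq_one {q : Quaternion ℝ} (hq : q.re = 0)
    (hq1 : ‖q‖ = 1) (θ : ℝ) : NormedSpace.exp (θ • q) = ↑(cos θ) + sin θ • q := by
  rcases eq_or_ne θ 0 with rfl | hθ
  · simp
  rw [exp_of_re_eq_zero _ (by simp [hq]), norm_smul, hq1, mul_one, norm_eq_abs, smul_smul]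
  rcases abs_choice θ with h | h <;> rw [h]
  · rw [div_mul_cancel₀ _ hθ]
  · rw [cos_neg, sin_neg, neg_div_neg_eq, div_mul_cancel₀ _ hθ]

end Quaternion

theorem norm_qi : ‖qi‖ = 1 :=
  Quaternion.norm_eq_one_of_normSq_eq_one (by rw [Quaternion.normSq_def']; simp [qi])

theorem norm_qj : ‖qj‖ = 1 :=
  Quaternion.norm_eq_one_of_normSq_eq_one (by rw [Quaternion.normSq_def']; simp [qj])

noncomputable def expJI (a b : ℝ) : Quaternion ℝ :=
  NormedSpace.exp (a • qj) * NormedSpace.exp (b • qi)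

theorem expJI_eq_mul (a b : ℝ) :
    expJI a b = (↑(cos a) + sin a • qj) * (↑(cos b) + sin b • qi) := by
  rw [expJI, Quaternion.exp_smul_of_re_eq_zero_of_norm_eq_one rfl norm_qj,
    Quaternion.exp_smul_of_re_eq_zero_of_norm_eq_one rfl norm_qi]

theorem expJI_eq (a b : ℝ) :
    expJI a b = ⟨cos a * cos b, cos a * sin b, sin a * cos b, -(sin a * sin b)⟩ := by
  rw [expJI_eq_mul]
  ext <;> simp <;> simp [qi, qj]

theorem norm_expJI (a b : ℝ) : ‖expJI a b‖ = 1 := by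
  refine Quaternion.norm_eq_one_of_normSq_eq_one ?_
  rw [Quaternion.normSq_def', expJI_eq]
  dsimp only
  linear_combination cos a ^ 2 * sin_sq_add_cos_sq b + sin a ^ 2 * sin_sq_add_cos_sq b +
    sin_sq_add_cos_sq a

theorem continuous_expJI : Continuous (Function.uncurry expJI) := by
  simp_rw [Function.uncurry_def, expJI_eq_mul]
  have := Quaternion.continuous_coe
  fun_prop

theorem four_cos_add_eq_sum_expJI (a b : ℝ) :
    ((4 * cos (a + b) : ℝ) : Quaternion ℝ) = expJI a b * (1 - qi * qj) +
      expJI a (-b) * (1 + qi * qj) + expJI (-a) b * (1 + qi * qj) +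
      expJI (-a) (-b) * (1 - qi * qj) := by
  simp only [expJI_eq_mul, cos_neg, sin_neg, cos_add]
  ext <;> simp <;> simp [qi, qj] <;> ring

theorem four_sin_add_eq_sum_expJI (a b : ℝ) :
    ((4 * sin (a + b) : ℝ) : Quaternion ℝ) = expJI a b * (-qi - qj) + expJI a (-b) * (qi - qj) +
      expJI (-a) b * (qj - qi) + expJI (-a) (-b) * (qi + qj) := by
  simp only [expJI_eq_mul, cos_neg, sin_neg, sin_add]
  ext <;> simp <;> simp [qi, qj] <;> ring

theorem integral_cos_sin_add_smul_eq_zero {α : Type*} [MeasurableSpace α] {μ : Measure α}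
    {F : α → Quaternion ℝ} (hF : Integrable F μ) {a b : α → ℝ} (ha : Measurable a)
    (hb : Measurable b)
    (h₁ : ∫ x, F x * expJI (a x) (b x) ∂μ = 0) (h₂ : ∫ x, F x * expJI (a x) (-b x) ∂μ = 0)
    (h₃ : ∫ x, F x * expJI (-a x) (b x) ∂μ = 0) (h₄ : ∫ x, F x * expJI (-a x) (-b x) ∂μ = 0) :
    ∫ x, cos (a x + b x) • F x ∂μ = 0 ∧ ∫ x, sin (a x + b x) • F x ∂μ = 0 := by
  have hint : ∀ {a' b' : α → ℝ}, Measurable a' → Measurable b' →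
      Integrable (fun x => F x * expJI (a' x) (b' x)) μ := fun ha' hb' =>
    hF.mul_bdd (continuous_expJI.comp_aestronglyMeasurable₂ ha'.aestronglyMeasurable
      hb'.aestronglyMeasurable) (ae_of_all _ fun x => (norm_expJI _ _).le)
  have hcomb : ∀ c₁ c₂ c₃ c₄ : Quaternion ℝ, ∫ x, F x * (expJI (a x) (b x) * c₁ +
      expJI (a x) (-b x) * c₂ + expJI (-a x) (b x) * c₃ + expJI (-a x) (-b x) * c₄) ∂μ = 0 := by
    intro c₁ c₂ c₃ c₄
    have i₁ := hint ha hb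
    have i₂ : Integrable (fun x => F x * expJI (a x) (-b x)) μ := hint ha hb.neg
    have i₃ : Integrable (fun x => F x * expJI (-a x) (b x)) μ := hint ha.neg hb
    have i₄ : Integrable (fun x => F x * expJI (-a x) (-b x)) μ := hint ha.neg hb.neg
    simp only [mul_add, ← mul_assoc]
    rw [integral_add, integral_add, integral_add, integral_mul_const_of_integrable i₁,
      integral_mul_const_of_integrable i₂, integral_mul_const_of_integrable i₃,
      integral_mul_const_of_integrable i₄, h₁, h₂, h₃, h₄]
    · simp
    exacts [i₁.mul_const _, i₂.mul_const _, (i₁.mul_const _).add (i₂.mul_const _),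
      i₃.mul_const _, ((i₁.mul_const _).add (i₂.mul_const _)).add (i₃.mul_const _),
      i₄.mul_const _]
  have hsmul : ∀ c : α → ℝ,
      ∫ x, c x • F x ∂μ = (4 : ℝ)⁻¹ • ∫ x, F x * ((4 * c x : ℝ) : Quaternion ℝ) ∂μ := by
    intro c
    simp_rw [Quaternion.mul_coe_eq_smul, mul_smul, integral_smul,
      inv_smul_smul₀ (four_ne_zero (α := ℝ))]
  constructor
  · rw [hsmul]
    simp_rw [four_cos_add_eq_sum_expJI]
    rw [hcomb, smul_zero]
  · rw [hsmul]
    simp_rw [four_sin_add_eq_sum_expJI]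
    rw [hcomb, smul_zero]

/-- Completeness of the exponential system in `L²([-τ,τ]², ℍ)`: if all the modified
quaternionic Fourier coefficients of `F` vanish, then `F = 0` a.e. on `[-τ,τ]²`. -/
theorem Efun_complete (τ : ℝ) (hτ : 0 < τ) (F : ℝ × ℝ → Quaternion ℝ)
    (hF : MemLp F 2 (volume.restrict (Set.Icc (-τ) τ ×ˢ Set.Icc (-τ) τ)))
    (h : ∀ n : ℤ × ℤ,
      (∫ ω in (Set.Icc (-τ) τ ×ˢ Set.Icc (-τ) τ),
        F ω * NormedSpace.exp ((π * (n.2 : ℝ) * ω.2 / τ) • qj) *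
          NormedSpace.exp ((π * (n.1 : ℝ) * ω.1 / τ) • qi)) = 0) :
    ∀ᵐ ω ∂(volume.restrict (Set.Icc (-τ) τ ×ˢ Set.Icc (-τ) τ)), F ω = 0 := by
  have hμ : volume.restrict (Icc (-τ) τ ×ˢ Icc (-τ) τ) =
      (volume.restrict (Icc (-τ) τ)).prod (volume.restrict (Icc (-τ) τ)) := by
    rw [Measure.prod_restrict, Measure.volume_eq_prod]
  have hsys := (isCompleteSystem_fourier_Icc (neg_lt_self hτ)).prod
    (isCompleteSystem_fourier_Icc (neg_lt_self hτ)) (fun n => memLp_top_fourier_coe _ n _)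
    (fun n => memLp_top_fourier_coe _ n _)
  have hJI : ∀ n : ℤ × ℤ, ∫ ω in Icc (-τ) τ ×ˢ Icc (-τ) τ,
      F ω * expJI (π * n.2 * ω.2 / τ) (π * n.1 * ω.1 / τ) = 0 := fun n => by
    simpa only [expJI, mul_assoc] using h n
  rw [hμ] at hF hJI ⊢
  have htrig := fun n : ℤ × ℤ => integral_cos_sin_add_smul_eq_zero (hF.integrable one_le_two)
    (by fun_prop) (by fun_prop) (hJI n) (by simpa [neg_div] using hJI (-n.1, n.2))
    (by simpa [neg_div] using hJI (n.1, -n.2)) (by simpa [neg_div] using hJI (-n.1, -n.2))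
  refine hsys.ae_eq_zero_of_integral_re_im_smul (fun n => ?_) hF (fun n => ?_) (fun n => ?_)
  · exact ((memLp_top_fourier_coe _ n.2 _).comp_snd _).mul' (r := ⊤)
      ((memLp_top_fourier_coe _ n.1 _).comp_fst _)
  · simpa only [fourier_mul_fourier_eq_exp, Complex.exp_ofReal_mul_I_re] using (htrig n).1
  · simpa only [fourier_mul_fourier_eq_exp, Complex.exp_ofReal_mul_I_im] using (htrig n).2
end
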